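/- arXiv:2404.05780 — 2 statements merged into one kernel-verified Lean document; each statement's English description precedes it below -/
import Mathlib

section
/- Let R be an integral domain of Krull dimension 1. Then every upper triangular unimodular 2×2 matrix over R is simply extendable. -/
open Matrix

/-- A `2 × 2` matrix is unimodular if its four entries generate the unit ideal. -/
def Unimodular2 {R : Type*} [CommRing R] (A : Matrix (Fin 2) (Fin 2) R) : Prop :=
  Ideal.span {A 0 0, A 0 1, A 1 0, A 1 1} = ⊤

/-- A `2 × 2` matrix is extendable if it is the top-left block of a `3 × 3` matrix
of determinant `1`. -/
def Extendable {R : Type*} [CommRing R] (A : Matrix (Fin 2) (Fin 2) R) : Prop :=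
  ∃ B : Matrix (Fin 3) (Fin 3) R, B.det = 1 ∧
    ∀ i j : Fin 2, B i.castSucc j.castSucc = A i j

/-- A `2 × 2` matrix is simply extendable if it is the top-left block of a `3 × 3` matrix
of determinant `1` whose `(3,3)` entry is `0`. -/
def SimplyExtendable {R : Type*} [CommRing R] (A : Matrix (Fin 2) (Fin 2) R) : Prop :=
  ∃ B : Matrix (Fin 3) (Fin 3) R, B.det = 1 ∧
    (∀ i j : Fin 2, B i.castSucc j.castSucc = A i j) ∧ B 2 2 = 0

/-!
For `A = [[a, b], [0, d]]` and a third row `(p, q, 0)`, expanding the determinant along the third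
column shows that `A` is simply extendable as soon as `b p - a q` and `d p` are coprime. If `d = 0`
take `(p, q) = (v, -u)` with `u a + v b = 1`. If `d ≠ 0`, then `R ⧸ (d)` has dimension zero, so
every `a` satisfies `a ^ n (1 - a y) = 0` there for some `n` and `y`; with `a` and `b` coprime
modulo `d`, this makes `b + (1 - b) y a` a unit modulo `d`, and `(p, q) = (1, -(1 - b) y)` works.
-/

open scoped nonZeroDivisors

theorem Ring.KrullDimLE.exists_pow_mul_one_sub_mul_eq_zero {S : Type*} [CommRing S]
    [Ring.KrullDimLE 0 S] (a : S) : ∃ (n : ℕ) (y : S), a ^ n * (1 - a * y) = 0 := by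
  by_contra! h
  let M : Submonoid S :=
    { carrier := {r | ∃ (n : ℕ) (y : S), r = a ^ n * (1 - a * y)}
      mul_mem' := by
        rintro _ _ ⟨n, y, rfl⟩ ⟨m, z, rfl⟩
        exact ⟨n + m, y + z - a * y * z, by ring⟩
      one_mem' := ⟨0, 0, by ring⟩ }
  have hM : Disjoint ((⊥ : Ideal S) : Set S) M := by
    rw [Set.disjoint_left]
    rintro _ rfl ⟨n, y, hy⟩
    exact h n y hy.symm
  obtain ⟨p, hp, -, hpM⟩ := Ideal.exists_le_prime_disjoint ⊥ M hM
  have ha : a ∉ p := fun ha ↦ Set.disjoint_left.mp hpM ha ⟨1, 0, by ring⟩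
  -- `p` is maximal, so `p + (a) = 1` puts an element `1 - a y` of `M` into `p`.
  obtain ⟨y, q, hq, hyq⟩ := hp.isMaximal'.exists_inv ha
  exact Set.disjoint_left.mp hpM hq ⟨0, y, by linear_combination hyq⟩

theorem IsCoprime.isUnit_add_mul_of_pow_mul_one_sub_mul_eq_zero {S : Type*} [CommRing S]
    {a b y : S} {n : ℕ} (hab : IsCoprime a b) (h : a ^ n * (1 - a * y) = 0) :
    IsUnit (b + (1 - b) * y * a) := by
  have h₁ : IsCoprime (b + (1 - b) * y * a) (1 - a * y) := by
    convert isCoprime_one_left.add_mul_left_left (b - 1) using 1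
    ring
  have h₂ : IsCoprime (b + (1 - b) * y * a) a := hab.symm.add_mul_right_left _
  rw [← isCoprime_zero_right, ← h]
  exact h₂.pow_right.mul_right h₁

theorem Ring.KrullDimLE.exists_isUnit_add_mul_of_isCoprime {S : Type*} [CommRing S]
    [Ring.KrullDimLE 0 S] {a b : S} (h : IsCoprime a b) : ∃ w, IsUnit (b + w * a) := by
  obtain ⟨n, y, hy⟩ := exists_pow_mul_one_sub_mul_eq_zero a
  exact ⟨_, h.isUnit_add_mul_of_pow_mul_one_sub_mul_eq_zero hy⟩

theorem Ring.krullDimLE_zero_quotient_span_singleton {R : Type*} [CommRing R]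
    (hR : ringKrullDim R ≤ 1) {d : R} (hd : d ∈ R⁰) :
    Ring.KrullDimLE 0 (R ⧸ Ideal.span {d}) := by
  have := (ringKrullDim_quotient_succ_le_of_nonZeroDivisor hd).trans hR
  rw [Ring.krullDimLE_iff]
  exact Order.le_of_lt_succ (ENat.WithBot.add_one_le_natCast_iff.mp this)

theorem Ideal.Quotient.isCoprime_of_isUnit_mk_span_singleton {R : Type*} [CommRing R]
    {x d : R} (h : IsUnit (Ideal.Quotient.mk (Ideal.span {d}) x)) : IsCoprime x d := by
  obtain ⟨s, hs⟩ := h.exists_right_inv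
  obtain ⟨s, rfl⟩ := Ideal.Quotient.mk_surjective s
  rw [← map_mul, ← map_one (Ideal.Quotient.mk _), Ideal.Quotient.eq,
    Ideal.mem_span_singleton'] at hs
  obtain ⟨k, hk⟩ := hs
  exact ⟨s, -k, by linear_combination -hk⟩

theorem Ideal.exists_mul_add_mul_add_mul_eq_one {R : Type*} [CommRing R] {a b c : R}
    (h : Ideal.span {a, b, c} = ⊤) : ∃ u v w, u * a + v * b + w * c = 1 := by
  obtain ⟨u, z, hz, hone⟩ := Ideal.mem_span_insert.mp ((Ideal.eq_top_iff_one _).mp h)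
  obtain ⟨v, w, rfl⟩ := Ideal.mem_span_pair.mp hz
  exact ⟨u, v, w, by rw [hone]; ring⟩

theorem exists_isCoprime_add_mul_of_mem_nonZeroDivisors {R : Type*} [CommRing R]
    (hR : ringKrullDim R ≤ 1) {a b d u v t : R} (hd : d ∈ R⁰)
    (huvt : u * a + v * b + t * d = 1) : ∃ w, IsCoprime (b + w * a) d := by
  have := Ring.krullDimLE_zero_quotient_span_singleton hR hd
  let π := Ideal.Quotient.mk (Ideal.span {d})
  have hab : IsCoprime (π a) (π b) :=
    ⟨π u, π v, by simpa [π, Ideal.Quotient.mk_singleton_self] using congrArg π huvt⟩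
  obtain ⟨w, hw⟩ := Ring.KrullDimLE.exists_isUnit_add_mul_of_isCoprime hab
  obtain ⟨w, rfl⟩ := Ideal.Quotient.mk_surjective w
  exact ⟨w, Ideal.Quotient.isCoprime_of_isUnit_mk_span_singleton (by simpa [π] using hw)⟩

theorem exists_isCoprime_sub_mul_of_span_eq_top {R : Type*} [CommRing R] [IsDomain R]
    (hR : ringKrullDim R ≤ 1) {a b d : R} (h : Ideal.span {a, b, d} = ⊤) :
    ∃ p q, IsCoprime (b * p - a * q) (d * p) := by
  obtain ⟨u, v, t, huvt⟩ := Ideal.exists_mul_add_mul_add_mul_eq_one h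
  rcases eq_or_ne d 0 with rfl | hd
  · refine ⟨v, -u, ?_⟩
    rw [zero_mul, isCoprime_zero_right]
    convert isUnit_one
    linear_combination huvt
  · obtain ⟨w, hw⟩ :=
      exists_isCoprime_add_mul_of_mem_nonZeroDivisors hR (mem_nonZeroDivisors_of_ne_zero hd) huvt
    exact ⟨1, -w, by simpa [mul_comm] using hw⟩

theorem simplyExtendable_of_isCoprime {R : Type*} [CommRing R] {A : Matrix (Fin 2) (Fin 2) R}
    (p q : R) (h : IsCoprime (A 0 1 * p - A 0 0 * q) (A 1 1 * p - A 1 0 * q)) :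
    SimplyExtendable A := by
  obtain ⟨s, t, hst⟩ := h
  refine ⟨!![A 0 0, A 0 1, -t; A 1 0, A 1 1, s; p, q, 0], ?_, ?_, rfl⟩
  · rw [det_fin_three]
    simp only [of_apply, cons_val', cons_val_zero, cons_val_one, cons_val_two, empty_val',
      cons_val_fin_one, head_cons, tail_cons, head_fin_const]
    linear_combination hst
  · intro i j
    fin_cases i <;> fin_cases j <;> rfl

theorem stmt3 (R : Type*) [CommRing R] [IsDomain R] (hdim : ringKrullDim R = 1) :
    ∀ A : Matrix (Fin 2) (Fin 2) R, Unimodular2 A → A 1 0 = 0 → SimplyExtendable A := by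
  intro A hA h10
  have hspan : Ideal.span {A 0 0, A 0 1, A 1 1} = ⊤ := by
    rwa [Unimodular2, h10, Set.insert_comm (A 0 1), Set.insert_comm (A 0 0),
      Ideal.span_insert_zero] at hA
  obtain ⟨p, q, hpq⟩ := exists_isCoprime_sub_mul_of_span_eq_top hdim.le hspan
  exact simplyExtendable_of_isCoprime p q (by simpa [h10] using hpq)
end

section
/- Let R be a commutative ring and let A be a 2×2 matrix over R. Then A is extendable if and only if the reduction of A modulo the principal ideal R·det(A) is a simply extendable 2×2 matrix over R/(R·det(A)). In particular, if det(A) = 0, then A is extendable if and only if A is simply extendable. -/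
open Matrix

/-!
Every `3 × 3` matrix with top-left block `A` is a border `[[A, u], [vᵀ, c]]`, and expanding along
the corner gives `det = d₀(u, v) + c · det A`, where `d₀` is the determinant with corner `0`.
So `A` is extendable iff `d₀(u, v) ≡ 1` modulo `det A` for some `u, v`: modulo `det A` the corner
is invisible, and conversely if `d₀(u, v) = 1 + t · det A` for lifts `u, v` then the corner `-t`
gives determinant `1`.
-/

namespace Matrix

def border {R : Type*} (A : Matrix (Fin 2) (Fin 2) R) (u v : Fin 2 → R) (c : R) :
    Matrix (Fin 3) (Fin 3) R :=
  !![A 0 0, A 0 1, u 0; A 1 0, A 1 1, u 1; v 0, v 1, c]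

variable {R S : Type*}

lemma border_castSucc_castSucc (A : Matrix (Fin 2) (Fin 2) R) (u v : Fin 2 → R) (c : R)
    (i j : Fin 2) : border A u v c i.castSucc j.castSucc = A i j := by
  fin_cases i <;> fin_cases j <;> rfl

lemma eq_border (B : Matrix (Fin 3) (Fin 3) R) :
    B = border (of fun i j : Fin 2 => B i.castSucc j.castSucc)
      (fun i => B i.castSucc 2) (fun j => B 2 j.castSucc) (B 2 2) := by
  ext i j
  fin_cases i <;> fin_cases j <;> rfl

lemma border_map (f : R → S) (A : Matrix (Fin 2) (Fin 2) R) (u v : Fin 2 → R) (c : R) :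
    (border A u v c).map f = border (A.map f) (f ∘ u) (f ∘ v) (f c) := by
  ext i j
  fin_cases i <;> fin_cases j <;> rfl

lemma det_border [CommRing R] (A : Matrix (Fin 2) (Fin 2) R) (u v : Fin 2 → R) (c : R) :
    (border A u v c).det = (border A u v 0).det + c * A.det := by
  simp only [border, det_fin_three, det_fin_two, of_apply, cons_val', cons_val_zero, cons_val_one,
    cons_val_two, empty_val', cons_val_fin_one, head_cons, tail_cons, head_fin_const]
  ring

end Matrix

section

variable {R S : Type*} [CommRing R] [CommRing S]

lemma extendable_iff_exists_border (A : Matrix (Fin 2) (Fin 2) R) :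
    Extendable A ↔ ∃ u v c, (border A u v c).det = 1 := by
  constructor
  · rintro ⟨B, hB, hA⟩
    have hBA : (of fun i j : Fin 2 => B i.castSucc j.castSucc) = A := ext hA
    exact ⟨_, _, _, by rwa [eq_border B, hBA] at hB⟩
  · rintro ⟨u, v, c, h⟩
    exact ⟨_, h, border_castSucc_castSucc A u v c⟩

lemma simplyExtendable_iff_exists_border (A : Matrix (Fin 2) (Fin 2) R) :
    SimplyExtendable A ↔ ∃ u v, (border A u v 0).det = 1 := by
  constructor
  · rintro ⟨B, hB, hA, h22⟩
    have hBA : (of fun i j : Fin 2 => B i.castSucc j.castSucc) = A := ext hA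
    exact ⟨_, _, by rwa [eq_border B, hBA, h22] at hB⟩
  · rintro ⟨u, v, h⟩
    exact ⟨_, h, border_castSucc_castSucc A u v 0, rfl⟩

lemma Extendable.map {A : Matrix (Fin 2) (Fin 2) R} (h : Extendable A) (f : R →+* S) :
    Extendable (A.map f) := by
  obtain ⟨u, v, c, h⟩ := (extendable_iff_exists_border A).1 h
  refine (extendable_iff_exists_border _).2 ⟨f ∘ u, f ∘ v, f c, ?_⟩
  rw [← border_map, ← RingHom.mapMatrix_apply, ← RingHom.map_det, h, map_one]

lemma extendable_iff_simplyExtendable_of_det_eq_zero {A : Matrix (Fin 2) (Fin 2) R}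
    (hA : A.det = 0) : Extendable A ↔ SimplyExtendable A := by
  rw [extendable_iff_exists_border, simplyExtendable_iff_exists_border]
  constructor
  · rintro ⟨u, v, c, h⟩
    exact ⟨u, v, by rwa [det_border, hA, mul_zero, add_zero] at h⟩
  · rintro ⟨u, v, h⟩
    exact ⟨u, v, 0, h⟩

lemma extendable_of_simplyExtendable_quotient {A : Matrix (Fin 2) (Fin 2) R} {I : Ideal R}
    (hI : I ≤ Ideal.span {A.det}) (h : SimplyExtendable (A.map (Ideal.Quotient.mk I))) :
    Extendable A := by
  obtain ⟨u', v', h⟩ := (simplyExtendable_iff_exists_border _).1 h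
  obtain ⟨u, rfl⟩ := Ideal.Quotient.mk_surjective.comp_left u'
  obtain ⟨v, rfl⟩ := Ideal.Quotient.mk_surjective.comp_left v'
  have hmk : Ideal.Quotient.mk I (border A u v 0).det = 1 := by
    rw [RingHom.map_det, RingHom.mapMatrix_apply, border_map, map_zero, h]
  have hmem : (border A u v 0).det - 1 ∈ Ideal.span {A.det} :=
    hI <| Ideal.Quotient.eq_zero_iff_mem.1 <| by rw [map_sub, hmk, map_one, sub_self]
  obtain ⟨t, ht⟩ := Ideal.mem_span_singleton'.1 hmem
  refine (extendable_iff_exists_border A).2 ⟨u, v, -t, ?_⟩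
  rw [det_border]
  linear_combination -ht

end

theorem stmt16 (R : Type*) [CommRing R] (A : Matrix (Fin 2) (Fin 2) R) :
    (Extendable A ↔
      SimplyExtendable (A.map (Ideal.Quotient.mk (Ideal.span {A.det})))) ∧
    (A.det = 0 → (Extendable A ↔ SimplyExtendable A)) := by
  have hdet : (A.map (Ideal.Quotient.mk (Ideal.span {A.det}))).det = 0 := by
    rw [← RingHom.mapMatrix_apply, ← RingHom.map_det]
    exact Ideal.Quotient.eq_zero_iff_mem.2 (Ideal.mem_span_singleton_self _)
  refine ⟨⟨fun h => ?_, extendable_of_simplyExtendable_quotient le_rfl⟩,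
    extendable_iff_simplyExtendable_of_det_eq_zero⟩
  exact (extendable_iff_simplyExtendable_of_det_eq_zero hdet).1 (h.map _)
end
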